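/- Let G be a finite group and let H be a normal subgroup of G with H \cap [G,G] = {1}. Then D(G) <= D(H) * D(G/H), where D denotes the large Davenport constant. -/

import Mathlib

/-- The set of products of a multiset `S` over `G`: all elements obtained by
multiplying the terms of `S` in some order. -/
def prodSet {G : Type*} [Group G] (S : Multiset G) : Set G :=
  {g | ∃ l : List G, (l : Multiset G) = S ∧ l.prod = g}

/-- `S` is a product-one sequence if its terms can be ordered with product `1`. -/
def IsProductOne {G : Type*} [Group G] (S : Multiset G) : Prop :=
  (1 : G) ∈ prodSet S

/-- `S` is product-one free if no nonempty sub-multiset is a product-one sequence. -/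
def ProductOneFree {G : Type*} [Group G] (S : Multiset G) : Prop :=
  ∀ T : Multiset G, T ≤ S → T ≠ 0 → ¬ IsProductOne T

/-- `S` is a minimal product-one sequence (an atom): a nonempty product-one sequence
that cannot be factored into two nonempty product-one sub-multisets. -/
def IsMinimalProductOne {G : Type*} [Group G] (S : Multiset G) : Prop :=
  S ≠ 0 ∧ IsProductOne S ∧
    ¬ ∃ T T' : Multiset G, S = T + T' ∧ T ≠ 0 ∧ T' ≠ 0 ∧ IsProductOne T ∧ IsProductOne T'

/-- The small Davenport constant: the supremum of lengths of product-one free sequences. -/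
noncomputable def smallDavenport (G : Type*) [Group G] : ℕ∞ :=
  sSup {n : ℕ∞ | ∃ S : Multiset G, ProductOneFree S ∧ (S.card : ℕ∞) = n}

/-- The large Davenport constant: the supremum of lengths of minimal product-one sequences. -/
noncomputable def largeDavenport (G : Type*) [Group G] : ℕ∞ :=
  sSup {n : ℕ∞ | ∃ S : Multiset G, IsMinimalProductOne S ∧ (S.card : ℕ∞) = n}

/-!
Project a minimal product-one sequence `S` over `G` to `G ⧸ H` and factor the image into at most
`D(G ⧸ H)`-long atoms. Lifting the factorization splits `S` into blocks, each of which can be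
ordered with product in `H`; these products form a sequence `W` over `H`. Since `H` meets
`[G, G]` trivially, an element of `H` is determined by its image in the abelianization, so `W` is
product-one; and a factorization of `W` would reassemble into one of `S`, so `W` is minimal.
Hence the number of blocks is at most `D(H)`.
-/

namespace Multiset

variable {α β : Type*}

theorem exists_list_of_map_eq_coe (f : α → β) :
    ∀ {s : Multiset α} {m : List β}, s.map f = m →
      ∃ l : List α, (l : Multiset α) = s ∧ l.map f = m
  | s, [], h => ⟨[], (by simpa using h : s = 0).symm, rfl⟩
  | s, b :: m, h => by
    classical
    obtain ⟨a, ha, rfl, hs⟩ := (map_eq_cons f s _ b).mpr (by rw [h, cons_coe])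
    obtain ⟨l, hl, rfl⟩ := exists_list_of_map_eq_coe f hs
    exact ⟨a :: l, by rw [← cons_coe, hl, cons_erase ha], rfl⟩

theorem exists_eq_add_of_map_eq_add (f : α → β) {s : Multiset α} {t u : Multiset β}
    (h : s.map f = t + u) :
    ∃ s₁ s₂, s = s₁ + s₂ ∧ s₁.map f = t ∧ s₂.map f = u := by
  classical
  induction t using Multiset.induction generalizing s with
  | empty => exact ⟨0, s, by simp, by simp, by simpa using h⟩
  | cons b t ih =>
    obtain ⟨a, ha, rfl, hs⟩ := (map_eq_cons f s _ b).mpr (by rw [h, cons_add])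
    obtain ⟨s₁, s₂, hs₁₂, rfl, rfl⟩ := ih hs
    exact ⟨a ::ₘ s₁, s₂, by rw [cons_add, ← hs₁₂, cons_erase ha], by simp, rfl⟩

theorem exists_sum_eq_of_map_eq_sum (f : α → β) {s : Multiset α} {P : Multiset (Multiset β)}
    (h : s.map f = P.sum) : ∃ Q : Multiset (Multiset α), Q.sum = s ∧ Q.map (map f) = P := by
  induction P using Multiset.induction generalizing s with
  | empty => exact ⟨0, (by simpa using h : s = 0).symm, rfl⟩
  | cons B P ih =>
    obtain ⟨s₁, s₂, rfl, rfl, hs₂⟩ :=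
      exists_eq_add_of_map_eq_add f (h.trans (sum_cons _ _))
    obtain ⟨Q, rfl, rfl⟩ := ih hs₂
    exact ⟨s₁ ::ₘ Q, sum_cons _ _, map_cons _ _ _⟩

end Multiset

section ProductOne

variable {G K : Type*} [Group G]

theorem one_mem_prodSet_zero : (1 : G) ∈ prodSet 0 := ⟨[], rfl, rfl⟩

theorem mul_mem_prodSet_add {a b : G} {A B : Multiset G} (ha : a ∈ prodSet A)
    (hb : b ∈ prodSet B) : a * b ∈ prodSet (A + B) := by
  obtain ⟨l, rfl, rfl⟩ := ha
  obtain ⟨m, rfl, rfl⟩ := hb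
  exact ⟨l ++ m, rfl, List.prod_append⟩

theorem prod_map_mem_prodSet_sum {φ : Multiset G → G} :
    ∀ {q : List (Multiset G)}, (∀ A ∈ q, φ A ∈ prodSet A) →
      (q.map φ).prod ∈ prodSet q.sum
  | [], _ => one_mem_prodSet_zero
  | A :: _, h => mul_mem_prodSet_add (h A List.mem_cons_self)
      (prod_map_mem_prodSet_sum fun B hB => h B (List.mem_cons_of_mem A hB))

theorem prodSet_map [Group K] (f : G →* K) (S : Multiset G) :
    prodSet (S.map f) = f '' prodSet S := by
  ext x
  constructor
  · rintro ⟨m, hm, rfl⟩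
    obtain ⟨l, rfl, rfl⟩ := Multiset.exists_list_of_map_eq_coe f hm.symm
    exact ⟨l.prod, ⟨l, rfl, rfl⟩, map_list_prod f l⟩
  · rintro ⟨_, ⟨l, rfl, rfl⟩, rfl⟩
    exact ⟨l.map f, rfl, (map_list_prod f l).symm⟩

theorem IsProductOne.map [Group K] (f : G →* K) {S : Multiset G} (h : IsProductOne S) :
    IsProductOne (S.map f) := by
  rw [IsProductOne, prodSet_map]
  exact ⟨1, h, map_one f⟩

theorem map_eq_prod_map_of_mem_prodSet [CommMonoid K] (f : G →* K) {S : Multiset G} {g : G}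
    (hg : g ∈ prodSet S) : f g = (S.map f).prod := by
  obtain ⟨l, rfl, rfl⟩ := hg
  exact map_list_prod f l

theorem IsProductOne.prod_map_eq_one [CommMonoid K] (f : G →* K) {S : Multiset G}
    (h : IsProductOne S) : (S.map f).prod = 1 := by
  rw [← map_eq_prod_map_of_mem_prodSet f h, map_one]

theorem isProductOne_sum_of_map {Q : Multiset (Multiset G)} {φ : Multiset G → G}
    (hφ : ∀ A ∈ Q, φ A ∈ prodSet A) (h : IsProductOne (Q.map φ)) : IsProductOne Q.sum := by
  obtain ⟨m, hm, hprod⟩ := h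
  obtain ⟨q, rfl, rfl⟩ := Multiset.exists_list_of_map_eq_coe φ hm.symm
  rw [IsProductOne, ← hprod, Multiset.sum_coe]
  exact prod_map_mem_prodSet_sum hφ

theorem isProductOne_of_prod_map_abelianization_eq_one {H : Subgroup G}
    (hH : H ⊓ commutator G = ⊥) {T : Multiset H}
    (h : (T.map fun x : H => Abelianization.of (x : G)).prod = 1) : IsProductOne T := by
  refine ⟨T.toList, T.coe_toList, Subtype.ext ?_⟩
  have hprod : (T.toList.prod : G) ∈ H ⊓ commutator G := by
    refine Subgroup.mem_inf.mpr ⟨SetLike.coe_mem _, ?_⟩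
    rw [← Abelianization.ker_of, MonoidHom.mem_ker, ← h]
    exact map_eq_prod_map_of_mem_prodSet (Abelianization.of.comp H.subtype)
      ⟨T.toList, T.coe_toList, rfl⟩
  simpa [hH] using hprod

theorem IsProductOne.exists_isMinimalProductOne_sum_eq {S : Multiset G}
    (h : IsProductOne S) :
    ∃ P : Multiset (Multiset G), (∀ A ∈ P, IsMinimalProductOne A) ∧ P.sum = S := by
  induction S using Multiset.strongInductionOn with
  | ih S ih =>
  by_cases h0 : S = 0
  · exact ⟨0, by simp, by simp [h0]⟩
  by_cases hmin : IsMinimalProductOne S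
  · exact ⟨{S}, by simpa, by simp⟩
  obtain ⟨T, T', rfl, hT0, hT'0, hT, hT'⟩ : ∃ T T' : Multiset G,
      S = T + T' ∧ T ≠ 0 ∧ T' ≠ 0 ∧ IsProductOne T ∧ IsProductOne T' := by
    simpa [IsMinimalProductOne, h0, h] using hmin
  obtain ⟨P, hP, rfl⟩ := ih _ (lt_add_of_pos_right _ (pos_iff_ne_zero.mpr hT'0)) hT
  obtain ⟨P', hP', rfl⟩ := ih _ (lt_add_of_pos_left _ (pos_iff_ne_zero.mpr hT0)) hT'
  refine ⟨P + P', fun A hA => ?_, Multiset.sum_add _ _⟩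
  exact (Multiset.mem_add.mp hA).elim (hP A) (hP' A)

theorem IsMinimalProductOne.card_le_largeDavenport {S : Multiset G}
    (h : IsMinimalProductOne S) : (S.card : ℕ∞) ≤ largeDavenport G :=
  le_sSup ⟨S, h, rfl⟩

theorem card_sum_le_card_mul_largeDavenport {P : Multiset (Multiset G)}
    (hP : ∀ A ∈ P, IsMinimalProductOne A) :
    (P.sum.card : ℕ∞) ≤ P.card * largeDavenport G := by
  calc (P.sum.card : ℕ∞) = (P.map fun A => (A.card : ℕ∞)).sum := by
        rw [← Multiset.join, Multiset.card_join, Nat.cast_multiset_sum, Multiset.map_map]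
        rfl
    _ ≤ (P.map fun A => (A.card : ℕ∞)).card • largeDavenport G :=
        Multiset.sum_le_card_nsmul _ _
          (by simpa using fun A hA => (hP A hA).card_le_largeDavenport)
    _ = P.card * largeDavenport G := by simp [nsmul_eq_mul]

theorem isMinimalProductOne_map_of_mem_prodSet {H : Subgroup G} (hH : H ⊓ commutator G = ⊥)
    {Q : Multiset (Multiset G)} (hS : IsMinimalProductOne Q.sum) (hQ : 0 ∉ Q)
    {φ : Multiset G → H} (hφ : ∀ A ∈ Q, (φ A : G) ∈ prodSet A) :
    IsMinimalProductOne (Q.map φ) := by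
  obtain ⟨hS0, hS1, hSmin⟩ := hS
  have pullback : ∀ Q' ≤ Q, Q'.map φ ≠ 0 → IsProductOne (Q'.map φ) →
      Q'.sum ≠ 0 ∧ IsProductOne Q'.sum := by
    intro Q' hQ' h0 h1
    obtain ⟨A, hA⟩ := Multiset.exists_mem_of_ne_zero (by simpa using h0 : Q' ≠ 0)
    refine ⟨fun hsum => hQ ?_,
      isProductOne_sum_of_map (fun A hA => hφ A (Multiset.mem_of_le hQ' hA)) ?_⟩
    · rw [← Multiset.le_zero.mp (hsum ▸ Multiset.le_sum_of_mem hA)]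
      exact Multiset.mem_of_le hQ' hA
    · simpa [Multiset.map_map] using h1.map H.subtype
  refine ⟨by simpa using fun h => hS0 (by simp [h]), ?_, ?_⟩
  · refine isProductOne_of_prod_map_abelianization_eq_one hH ?_
    calc ((Q.map φ).map fun x : H => Abelianization.of (x : G)).prod
        = (Q.map fun A => (A.map Abelianization.of).prod).prod := by
          rw [Multiset.map_map]
          exact congrArg _ (Multiset.map_congr rfl fun A hA =>
            map_eq_prod_map_of_mem_prodSet Abelianization.of (hφ A hA))
      _ = (Q.sum.map Abelianization.of).prod := by
          rw [← Multiset.join, Multiset.map_join, Multiset.prod_join, Multiset.map_map]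
          rfl
      _ = 1 := hS1.prod_map_eq_one _
  · rintro ⟨T, T', hW, hT0, hT'0, hT, hT'⟩
    obtain ⟨Q₁, Q₂, rfl, rfl, rfl⟩ := Multiset.exists_eq_add_of_map_eq_add φ hW
    obtain ⟨h₁0, h₁⟩ := pullback Q₁ (Multiset.le_add_right _ _) hT0 hT
    obtain ⟨h₂0, h₂⟩ := pullback Q₂ (Multiset.le_add_left _ _) hT'0 hT'
    exact hSmin ⟨Q₁.sum, Q₂.sum, Multiset.sum_add _ _, h₁0, h₂0, h₁, h₂⟩

theorem IsMinimalProductOne.card_le_largeDavenport_mul_quotient {H : Subgroup G} [H.Normal]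
    (hH : H ⊓ commutator G = ⊥) {S : Multiset G} (hS : IsMinimalProductOne S) :
    (S.card : ℕ∞) ≤ largeDavenport H * largeDavenport (G ⧸ H) := by
  set π := QuotientGroup.mk' H
  obtain ⟨P, hP, hPS⟩ := (hS.2.1.map π).exists_isMinimalProductOne_sum_eq
  obtain ⟨Q, rfl, rfl⟩ := Multiset.exists_sum_eq_of_map_eq_sum π hPS.symm
  have hlift : ∀ A ∈ Q, ∃ h : H, (h : G) ∈ prodSet A := by
    intro A hA
    obtain ⟨g, hg, hg1⟩ := (prodSet_map π A).subset (hP _ (Multiset.mem_map_of_mem _ hA)).2.1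
    exact ⟨⟨g, (QuotientGroup.eq_one_iff g).mp hg1⟩, hg⟩
  choose! φ hφ using hlift
  have hQ : 0 ∉ Q := fun h0 =>
    (hP 0 (by simpa using Multiset.mem_map_of_mem (Multiset.map π) h0)).1 rfl
  have hW := isMinimalProductOne_map_of_mem_prodSet hH hS hQ hφ
  calc (Q.sum.card : ℕ∞) = ((Q.map (Multiset.map π)).sum.card : ℕ∞) := by
        rw [hPS, Multiset.card_map]
    _ ≤ (Q.map (Multiset.map π)).card * largeDavenport (G ⧸ H) :=
        card_sum_le_card_mul_largeDavenport hP
    _ = (Q.map φ).card * largeDavenport (G ⧸ H) := by simp only [Multiset.card_map]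
    _ ≤ largeDavenport H * largeDavenport (G ⧸ H) := by gcongr; exact hW.card_le_largeDavenport

end ProductOne

theorem largeDavenport_le_mul_quotient_general {G : Type*} [Group G]
    (H : Subgroup G) [H.Normal] (hH : H ⊓ commutator G = ⊥) :
    largeDavenport G ≤ largeDavenport H * largeDavenport (G ⧸ H) :=
  sSup_le fun _ ⟨_, hS, hn⟩ => hn ▸ hS.card_le_largeDavenport_mul_quotient hH

/-- If `H ⊴ G` with `H ∩ [G,G] = 1`, then `D(G) ≤ D(H) * D(G/H)`. -/
theorem largeDavenport_le_mul_quotient {G : Type*} [Group G] [Finite G]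
    (H : Subgroup G) [H.Normal] (hH : H ⊓ commutator G = ⊥) :
    largeDavenport G ≤ largeDavenport H * largeDavenport (G ⧸ H) :=
  largeDavenport_le_mul_quotient_general H hH
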